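/- Fix integers d ≥ 1, M ≥ 1. Let J be a complex matrix indexed by (Fin M → Fin d) such that J commutes with U^{⊗M} for every unitary d×d complex matrix U, where U^{⊗M}(x,y) := ∏_i U(x i, y i). Then there exists α ∈ ℂ such that Π_sym^{(M)} J Π_sym^{(M)} = α · Π_sym^{(M)}. (This expresses that the symmetric power of the defining representation of the unitary group is irreducible, so by Schur's lemma the symmetric block of any operator in its commutant is a scalar.) -/

import Mathlib

open Matrix Kronecker BigOperators ComplexOrder

noncomputable section

/-- The matrix of the permutation `π ∈ S_M` acting on the `M` tensor factors of `(ℂ^d)^{⊗M}`. -/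
def permMat (d M : ℕ) (π : Equiv.Perm (Fin M)) :
    Matrix (Fin M → Fin d) (Fin M → Fin d) ℂ :=
  Matrix.of fun x y => if x = y ∘ π.symm then 1 else 0

/-- The orthogonal projector onto the symmetric subspace of `(ℂ^d)^{⊗M}`. -/
def symProj (d M : ℕ) : Matrix (Fin M → Fin d) (Fin M → Fin d) ℂ :=
  ((M.factorial : ℂ))⁻¹ • ∑ π : Equiv.Perm (Fin M), permMat d M π

/-- The dimension `d_S^M = binom(M+d-1, d-1)` of the symmetric subspace of `(ℂ^d)^{⊗M}`. -/
def dS (d M : ℕ) : ℕ := (M + d - 1).choose (d - 1)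

/-- Regard a pair of tuples as a single tuple via `Fin (N+K) ≃ Fin N ⊕ Fin K`. -/
def pairToFun (d N K : ℕ) (x : Fin N → Fin d) (o : Fin K → Fin d) :
    Fin (N + K) → Fin d :=
  fun i => Sum.elim x o (finSumFinEquiv.symm i)

/-- The projector onto the symmetric subspace of `(ℂ^d)^{⊗(N+K)}`, regarded as a matrix
indexed by pairs `((x,o),(x',o'))`. -/
def symProjNK (d N K : ℕ) :
    Matrix ((Fin N → Fin d) × (Fin K → Fin d)) ((Fin N → Fin d) × (Fin K → Fin d)) ℂ :=
  Matrix.of fun p q =>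
    symProj d (N + K) (pairToFun d N K p.1 p.2) (pairToFun d N K q.1 q.2)

/-- Partial trace over the output (second) factor. -/
def trOut {d N K : ℕ}
    (J : Matrix ((Fin N → Fin d) × (Fin K → Fin d)) ((Fin N → Fin d) × (Fin K → Fin d)) ℂ) :
    Matrix (Fin N → Fin d) (Fin N → Fin d) ℂ :=
  Matrix.of fun x x' => ∑ o : Fin K → Fin d, J (x, o) (x', o)

/-- The `M`-fold tensor power `U^{⊗M}` of a `d×d` matrix `U`. -/
def tpowU (d M : ℕ) (U : Matrix (Fin d) (Fin d) ℂ) :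
    Matrix (Fin M → Fin d) (Fin M → Fin d) ℂ :=
  Matrix.of fun x y => ∏ i, U (x i) (y i)

/-! Replacing `J` by `K = Π J Π` keeps the commutation with every `U^{⊗M}` and makes `K`
invariant under permutations on both sides. Since the unitary group acts transitively on the
spheres of `ℂ^d`, the form `v ↦ ⟨v^{⊗M}, K v^{⊗M}⟩` equals `α ‖v‖^{2M}`, which is also the
form of `α Π`. So `D = K - α Π` has a vanishing form on product vectors. That form is a
polynomial in `v̄` and `v`, and since `(v̄, v)` runs over a totally real subspace it vanishes as
a polynomial in independent variables. By permutation invariance its coefficient at the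
monomial of `(x, y)` is a positive multiple of `D x y`, hence `D = 0`. -/

section Permutations

variable {d M : ℕ}

lemma permMat_mulVec_apply (σ : Equiv.Perm (Fin M)) (w : (Fin M → Fin d) → ℂ)
    (x : Fin M → Fin d) : (permMat d M σ *ᵥ w) x = w (x ∘ σ) := by
  simp [mulVec, dotProduct, permMat, Equiv.eq_comp_symm]

lemma permMat_mul_apply (σ : Equiv.Perm (Fin M))
    (A : Matrix (Fin M → Fin d) (Fin M → Fin d) ℂ) (x y : Fin M → Fin d) :
    (permMat d M σ * A) x y = A (x ∘ σ) y := by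
  simp [mul_apply, permMat, Equiv.eq_comp_symm]

lemma mul_permMat_apply (σ : Equiv.Perm (Fin M))
    (A : Matrix (Fin M → Fin d) (Fin M → Fin d) ℂ) (x y : Fin M → Fin d) :
    (A * permMat d M σ) x y = A x (y ∘ σ.symm) := by
  simp [mul_apply, permMat]

lemma permMat_mul_permMat (σ π : Equiv.Perm (Fin M)) :
    permMat d M σ * permMat d M π = permMat d M (σ * π) := by
  ext x y
  rw [permMat_mul_apply]
  simp only [permMat, of_apply, Equiv.eq_comp_symm, Equiv.Perm.coe_mul, Function.comp_assoc]

lemma inv_factorial_smul_sum_perm_const {V : Type*} [AddCommGroup V] [Module ℂ V] (c : V) :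
    ((M.factorial : ℂ))⁻¹ • ∑ _σ : Equiv.Perm (Fin M), c = c := by
  rw [Finset.sum_const, Finset.card_univ, Fintype.card_perm, Fintype.card_fin,
    ← Nat.cast_smul_eq_nsmul ℂ, smul_smul,
    inv_mul_cancel₀ (Nat.cast_ne_zero.mpr M.factorial_ne_zero), one_smul]

lemma permMat_mul_symProj (σ : Equiv.Perm (Fin M)) :
    permMat d M σ * symProj d M = symProj d M := by
  rw [symProj, Matrix.mul_smul, Finset.mul_sum]
  simp_rw [permMat_mul_permMat]
  exact congrArg _ (Equiv.sum_comp (Equiv.mulLeft σ) (permMat d M))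

lemma symProj_mul_permMat (σ : Equiv.Perm (Fin M)) :
    symProj d M * permMat d M σ = symProj d M := by
  rw [symProj, Matrix.smul_mul, Finset.sum_mul]
  simp_rw [permMat_mul_permMat]
  exact congrArg _ (Equiv.sum_comp (Equiv.mulRight σ) (permMat d M))

lemma symProj_mul_symProj : symProj d M * symProj d M = symProj d M := by
  nth_rw 1 [symProj]
  rw [Matrix.smul_mul, Finset.sum_mul]
  simp_rw [permMat_mul_symProj]
  exact inv_factorial_smul_sum_perm_const _

end Permutations

section TensorPowers

variable {d M : ℕ}

/-- The product vector `v^{⊗M}`. -/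
def tpowVec (d M : ℕ) (v : Fin d → ℂ) : (Fin M → Fin d) → ℂ := fun x => ∏ i, v (x i)

/-- `⟨v^{⊗M}, A v^{⊗M}⟩`. -/
def tpowForm (A : Matrix (Fin M → Fin d) (Fin M → Fin d) ℂ) (v : Fin d → ℂ) : ℂ :=
  star (tpowVec d M v) ⬝ᵥ (A *ᵥ tpowVec d M v)

lemma tpowU_mul (A B : Matrix (Fin d) (Fin d) ℂ) :
    tpowU d M (A * B) = tpowU d M A * tpowU d M B := by
  ext x y
  simp only [tpowU, of_apply, mul_apply, Fintype.prod_sum, Finset.prod_mul_distrib]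

lemma tpowU_one : tpowU d M (1 : Matrix (Fin d) (Fin d) ℂ) = 1 := by
  ext x y
  simp only [tpowU, of_apply, one_apply]
  split_ifs with h
  · simp [h]
  · obtain ⟨i, hi⟩ := Function.ne_iff.mp h
    exact Finset.prod_eq_zero (Finset.mem_univ i) (if_neg hi)

lemma tpowU_conjTranspose (U : Matrix (Fin d) (Fin d) ℂ) :
    (tpowU d M U)ᴴ = tpowU d M Uᴴ := by
  ext x y
  simp [tpowU, star_prod]

lemma tpowU_mem_unitaryGroup {U : Matrix (Fin d) (Fin d) ℂ}
    (hU : U ∈ unitaryGroup (Fin d) ℂ) : tpowU d M U ∈ unitaryGroup (Fin M → Fin d) ℂ := by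
  rw [mem_unitaryGroup_iff', star_eq_conjTranspose, tpowU_conjTranspose, ← tpowU_mul,
    ← star_eq_conjTranspose, mem_unitaryGroup_iff'.mp hU, tpowU_one]

lemma tpowU_mulVec_tpowVec (U : Matrix (Fin d) (Fin d) ℂ) (v : Fin d → ℂ) :
    tpowU d M U *ᵥ tpowVec d M v = tpowVec d M (U *ᵥ v) := by
  ext x
  simp only [tpowVec, mulVec, dotProduct, tpowU, of_apply, Fintype.prod_sum,
    Finset.prod_mul_distrib]

lemma tpowVec_dotProduct (u w : Fin d → ℂ) :
    tpowVec d M u ⬝ᵥ tpowVec d M w = (u ⬝ᵥ w) ^ M := by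
  simp only [tpowVec, dotProduct, ← Finset.prod_mul_distrib]
  rw [← Fintype.prod_sum (fun (_ : Fin M) j => u j * w j), Finset.prod_const, Finset.card_univ,
    Fintype.card_fin]

lemma star_tpowVec (v : Fin d → ℂ) : star (tpowVec d M v) = tpowVec d M (star v) := by
  ext x
  simp [tpowVec, star_prod]

lemma tpowVec_smul (c : ℂ) (v : Fin d → ℂ) :
    tpowVec d M (c • v) = c ^ M • tpowVec d M v := by
  ext x
  simp [tpowVec, Finset.prod_mul_distrib]

lemma permMat_mulVec_tpowVec (σ : Equiv.Perm (Fin M)) (v : Fin d → ℂ) :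
    permMat d M σ *ᵥ tpowVec d M v = tpowVec d M v := by
  ext x
  rw [permMat_mulVec_apply]
  exact Equiv.prod_comp σ (fun i => v (x i))

lemma symProj_mulVec_tpowVec (v : Fin d → ℂ) :
    symProj d M *ᵥ tpowVec d M v = tpowVec d M v := by
  rw [symProj, smul_mulVec, sum_mulVec]
  simp_rw [permMat_mulVec_tpowVec]
  exact inv_factorial_smul_sum_perm_const _

lemma permMat_commute_tpowU (σ : Equiv.Perm (Fin M)) (U : Matrix (Fin d) (Fin d) ℂ) :
    Commute (permMat d M σ) (tpowU d M U) := by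
  ext x y
  rw [permMat_mul_apply, mul_permMat_apply]
  simp only [tpowU, of_apply, Function.comp_apply]
  rw [← Equiv.prod_comp σ (fun i => U (x i) (y (σ.symm i)))]
  simp

lemma symProj_commute_tpowU (U : Matrix (Fin d) (Fin d) ℂ) :
    Commute (symProj d M) (tpowU d M U) :=
  (Commute.sum_left _ _ _ fun σ _ => permMat_commute_tpowU σ U).smul_left _

lemma tpowForm_smul (A : Matrix (Fin M → Fin d) (Fin M → Fin d) ℂ) (c : ℂ)
    (v : Fin d → ℂ) :
    tpowForm A (c • v) = (star c * c) ^ M * tpowForm A v := by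
  simp only [tpowForm, tpowVec_smul, star_smul, mulVec_smul, smul_dotProduct, dotProduct_smul,
    smul_eq_mul, star_pow, mul_pow]
  ring

lemma tpowForm_symProj (v : Fin d → ℂ) : tpowForm (symProj d M) v = (star v ⬝ᵥ v) ^ M := by
  rw [tpowForm, symProj_mulVec_tpowVec, star_tpowVec, tpowVec_dotProduct]

end TensorPowers

lemma star_mulVec_dotProduct_mulVec_mulVec_of_commute {n : Type*} [Fintype n] [DecidableEq n]
    {W A : Matrix n n ℂ} (hW : W ∈ unitaryGroup n ℂ) (hA : Commute A W) (w : n → ℂ) :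
    star (W *ᵥ w) ⬝ᵥ (A *ᵥ (W *ᵥ w)) = star w ⬝ᵥ (A *ᵥ w) := by
  rw [star_mulVec, ← dotProduct_mulVec, mulVec_mulVec, mulVec_mulVec, Matrix.mul_assoc, hA.eq,
    ← Matrix.mul_assoc, ← star_eq_conjTranspose, mem_unitaryGroup_iff'.mp hW, Matrix.one_mul]

lemma exists_mem_unitaryGroup_eq_smul_mulVec_single {n : Type*} [Fintype n] [DecidableEq n]
    (v : n → ℂ) (i : n) :
    ∃ U ∈ unitaryGroup n ℂ, ∃ r : ℝ,
      star v ⬝ᵥ v = (r : ℂ) ^ 2 ∧ v = (r : ℂ) • (U *ᵥ Pi.single i 1) := by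
  set w : EuclideanSpace ℂ n := WithLp.toLp 2 v
  have hnorm : star v ⬝ᵥ v = (‖w‖ : ℂ) ^ 2 := by
    have := inner_self_eq_norm_sq_to_K (𝕜 := ℂ) w
    rw [EuclideanSpace.inner_toLp_toLp, dotProduct_comm] at this
    exact_mod_cast this
  by_cases hw : w = 0
  · have hv : v = 0 := by simpa [w] using hw
    exact ⟨1, one_mem _, 0, by simp [hv], by simp [hv]⟩
  set u := (‖w‖⁻¹ : ℂ) • w
  have hu : Orthonormal ℂ (Set.domRestrict {i} (fun _ : n => u)) := by
    rw [orthonormal_subsingleton_iff]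
    intro _
    simp [u, norm_smul, hw]
  obtain ⟨b, hb⟩ := hu.exists_orthonormalBasis_extension_of_card_eq (by simp)
  refine ⟨(EuclideanSpace.basisFun n ℂ).toBasis.toMatrix b,
    (EuclideanSpace.basisFun n ℂ).toMatrix_orthonormalBasis_mem_unitary b, ‖w‖, hnorm, ?_⟩
  ext k
  rw [Pi.smul_apply, mulVec_single_one, col_apply, Module.Basis.toMatrix_apply, hb i rfl]
  simp [u, hw, w]

lemma tpowForm_eq_of_commute {d M : ℕ} (i : Fin d)
    {A : Matrix (Fin M → Fin d) (Fin M → Fin d) ℂ}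
    (hA : ∀ U ∈ unitaryGroup (Fin d) ℂ, Commute A (tpowU d M U)) (v : Fin d → ℂ) :
    tpowForm A v = tpowForm A (Pi.single i 1) * (star v ⬝ᵥ v) ^ M := by
  obtain ⟨U, hU, r, hr, rfl⟩ := exists_mem_unitaryGroup_eq_smul_mulVec_single v i
  have hinv : tpowForm A (U *ᵥ Pi.single i 1) = tpowForm A (Pi.single i 1) := by
    rw [tpowForm, ← tpowU_mulVec_tpowVec, star_mulVec_dotProduct_mulVec_mulVec_of_commute
      (tpowU_mem_unitaryGroup hU) (hA U hU), tpowForm]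
  rw [hr, tpowForm_smul, hinv, Complex.star_def, Complex.conj_ofReal]
  ring

lemma MvPolynomial.eval_bind₁ {σ τ R : Type*} [CommSemiring R] (x : τ → R)
    (f : σ → MvPolynomial τ R) (p : MvPolynomial σ R) :
    eval x (bind₁ f p) = eval (fun i => eval x (f i)) p :=
  eval₂Hom_bind₁ (RingHom.id R) x f p

open MvPolynomial Complex in
lemma MvPolynomial.eq_zero_of_eval_sumElim_star {σ : Type*} {p : MvPolynomial (σ ⊕ σ) ℂ}
    (h : ∀ v : σ → ℂ, eval (Sum.elim (star v) v) p = 0) : p = 0 := by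
  -- `bind₁ φ p` is `p` in the real coordinates `v = a + i b`, `v̄ = a - i b`
  set φ : σ ⊕ σ → MvPolynomial (σ ⊕ σ) ℂ :=
    Sum.elim (fun j => X (.inl j) - C I * X (.inr j)) (fun j => X (.inl j) + C I * X (.inr j))
  have hreal : bind₁ φ p = 0 := by
    refine funext_set (fun _ => Set.range ((↑) : ℝ → ℂ))
      (fun _ => Set.infinite_range_of_injective ofReal_injective) fun w hw => ?_
    choose r hr using fun i => hw i (Set.mem_univ i)
    rw [eval_bind₁, map_zero, ← h (fun j => w (.inl j) + I * w (.inr j))]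
    congr 2
    ext (j | j) <;> simp [φ, ← hr, sub_eq_add_neg]
  refine MvPolynomial.funext fun z => ?_
  have := congrArg (eval (Sum.elim (fun j => (z (.inl j) + z (.inr j)) / 2)
    (fun j => (z (.inr j) - z (.inl j)) / (2 * I)))) hreal
  rw [eval_bind₁, map_zero] at this
  rw [map_zero, ← this]
  congr 2
  ext (j | j) <;>
    simp only [φ, eval_X, eval_C, Sum.elim_inl, Sum.elim_inr, map_sub, map_add, map_mul] <;>
    field_simp <;> ring

section Polarization

variable {d M : ℕ}

open MvPolynomial Finset

/-- The exponent of `∏ᵢ X̄_{x i} ∏ᵢ X_{y i}`, where the variable `inl j` stands for `v̄ⱼ` and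
`inr j` for `vⱼ`. -/
def pairExponent (x y : Fin M → Fin d) : Fin d ⊕ Fin d →₀ ℕ :=
  ∑ i, (Finsupp.single (.inl (x i)) 1 + Finsupp.single (.inr (y i)) 1)

def tpowFormPoly (A : Matrix (Fin M → Fin d) (Fin M → Fin d) ℂ) :
    MvPolynomial (Fin d ⊕ Fin d) ℂ :=
  ∑ p : (Fin M → Fin d) × (Fin M → Fin d), monomial (pairExponent p.1 p.2) (A p.1 p.2)

lemma eval_tpowFormPoly (A : Matrix (Fin M → Fin d) (Fin M → Fin d) ℂ) (v : Fin d → ℂ) :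
    eval (Sum.elim (star v) v) (tpowFormPoly A) = tpowForm A v := by
  simp only [tpowFormPoly, pairExponent, map_sum, monomial_sum_index]
  simp only [map_mul, eval_C, map_prod, eval_monomial, pow_zero, implies_true, pow_add,
    Finsupp.prod_add_index', Sum.elim_inl, Pi.star_apply, RCLike.star_def,
    Finsupp.prod_single_index, pow_one, Sum.elim_inr, one_mul, prod_mul_distrib,
    Fintype.sum_prod_type, tpowForm, dotProduct, tpowVec, star_prod, mulVec, mul_sum]
  exact sum_congr rfl fun _ _ => sum_congr rfl fun _ _ => by ring

lemma coeff_tpowFormPoly (A : Matrix (Fin M → Fin d) (Fin M → Fin d) ℂ)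
    (m : Fin d ⊕ Fin d →₀ ℕ) :
    (tpowFormPoly A).coeff m =
      ∑ p : (Fin M → Fin d) × (Fin M → Fin d) with pairExponent p.1 p.2 = m, A p.1 p.2 := by
  simp [tpowFormPoly, coeff_sum, coeff_monomial, sum_filter]

lemma pairExponent_apply_inl (x y : Fin M → Fin d) (j : Fin d) :
    pairExponent x y (.inl j) = #{i | x i = j} := by
  simp [pairExponent, Finsupp.single_apply]

lemma pairExponent_apply_inr (x y : Fin M → Fin d) (j : Fin d) :
    pairExponent x y (.inr j) = #{i | y i = j} := by
  simp [pairExponent, Finsupp.single_apply]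

lemma exists_perm_eq_comp_of_card_fiber_eq {ι α : Type*} [Fintype ι] [DecidableEq α]
    {x x' : ι → α} (h : ∀ a, #{i | x i = a} = #{i | x' i = a}) :
    ∃ σ : Equiv.Perm ι, x = x' ∘ σ := by
  have e : ∀ a, {i // x i = a} ≃ {i // x' i = a} := fun a =>
    Fintype.equivOfCardEq (by rw [Fintype.card_subtype, Fintype.card_subtype, h a])
  exact ⟨(Equiv.sigmaFiberEquiv x).symm.trans
    ((Equiv.sigmaCongrRight e).trans (Equiv.sigmaFiberEquiv x')),
    funext fun i => (e (x i) ⟨i, rfl⟩).2.symm⟩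

lemma eq_of_pairExponent_eq {D : Matrix (Fin M → Fin d) (Fin M → Fin d) ℂ}
    (hl : ∀ σ, permMat d M σ * D = D) (hr : ∀ σ, D * permMat d M σ = D)
    {x y x' y' : Fin M → Fin d}
    (he : pairExponent x y = pairExponent x' y') : D x y = D x' y' := by
  obtain ⟨σ, hσ⟩ := exists_perm_eq_comp_of_card_fiber_eq (x := x) (x' := x') fun j => by
    rw [← pairExponent_apply_inl x y, he, pairExponent_apply_inl]
  obtain ⟨τ, hτ⟩ := exists_perm_eq_comp_of_card_fiber_eq (x := y) (x' := y') fun j => by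
    rw [← pairExponent_apply_inr x y, he, pairExponent_apply_inr]
  subst hσ hτ
  rw [← permMat_mul_apply σ D, hl, ← τ.symm_symm, ← mul_permMat_apply τ.symm D, hr]

theorem eq_zero_of_tpowForm_eq_zero {D : Matrix (Fin M → Fin d) (Fin M → Fin d) ℂ}
    (hl : symProj d M * D = D) (hr : D * symProj d M = D) (h : ∀ v, tpowForm D v = 0) :
    D = 0 := by
  have hpoly : tpowFormPoly D = 0 :=
    eq_zero_of_eval_sumElim_star fun v => by rw [eval_tpowFormPoly, h]
  have hσl (σ) : permMat d M σ * D = D := by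
    rw [← hl, ← Matrix.mul_assoc, permMat_mul_symProj]
  have hσr (σ) : D * permMat d M σ = D := by
    rw [← hr, Matrix.mul_assoc, symProj_mul_permMat]
  ext x y
  have hcoeff := congrArg (coeff (pairExponent x y)) hpoly
  rw [coeff_tpowFormPoly, coeff_zero,
    sum_congr rfl fun p hp => eq_of_pairExponent_eq hσl hσr (mem_filter.mp hp).2, sum_const,
    smul_eq_zero] at hcoeff
  exact hcoeff.resolve_left (card_ne_zero_of_mem (mem_filter.mpr ⟨mem_univ (x, y), rfl⟩))

end Polarization

theorem stmt17_general (d M : ℕ) (hd : 1 ≤ d)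
    (J : Matrix (Fin M → Fin d) (Fin M → Fin d) ℂ)
    (hcomm : ∀ U : Matrix (Fin d) (Fin d) ℂ, U ∈ Matrix.unitaryGroup (Fin d) ℂ →
      J * tpowU d M U = tpowU d M U * J) :
    ∃ α : ℂ, symProj d M * J * symProj d M = α • symProj d M := by
  set P := symProj d M
  have hK (U) (hU : U ∈ unitaryGroup (Fin d) ℂ) : Commute (P * J * P) (tpowU d M U) :=
    ((symProj_commute_tpowU U).mul_left (hcomm U hU)).mul_left (symProj_commute_tpowU U)
  set α := tpowForm (P * J * P) (Pi.single ⟨0, hd⟩ 1)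
  refine ⟨α, sub_eq_zero.mp (eq_zero_of_tpowForm_eq_zero ?_ ?_ fun v => ?_)⟩
  · simp only [Matrix.mul_sub, Matrix.mul_smul, ← Matrix.mul_assoc, P, symProj_mul_symProj]
  · simp only [Matrix.sub_mul, Matrix.smul_mul, Matrix.mul_assoc, P, symProj_mul_symProj]
  · rw [tpowForm, sub_mulVec, smul_mulVec, dotProduct_sub, dotProduct_smul, ← tpowForm,
      ← tpowForm, tpowForm_symProj, tpowForm_eq_of_commute ⟨0, hd⟩ hK, smul_eq_mul, sub_self]

/-- Schur's lemma for the symmetric power: if a matrix `J` on `(ℂ^d)^{⊗M}` commutes with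
`U^{⊗M}` for every unitary `U`, then its symmetric block is a scalar multiple of the
symmetric projector. -/
theorem stmt17 (d M : ℕ) (hd : 1 ≤ d) (hM : 1 ≤ M)
    (J : Matrix (Fin M → Fin d) (Fin M → Fin d) ℂ)
    (hcomm : ∀ U : Matrix (Fin d) (Fin d) ℂ, U ∈ Matrix.unitaryGroup (Fin d) ℂ →
      J * tpowU d M U = tpowU d M U * J) :
    ∃ α : ℂ, symProj d M * J * symProj d M = α • symProj d M :=
  stmt17_general d M hd J hcomm
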